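/- (Lemma 2) For any nonempty bounded interval I = [a,b'] ⊂ ℝ, any t ≥ 0, and any subset U of C_b, one has α((T(t)U)_I) ≤ e^{−t} α(U_I), where for a set V ⊆ C_b the restriction V_I = {φ|_I : φ ∈ V} is regarded as a subset of the Banach space C(I,ℝ) with the supremum norm, and α is the Kuratowski measure of noncompactness in C(I,ℝ). -/

import Mathlib

open MeasureTheory Real Set
open scoped ENNReal

/-- Iterated convolutions: `a_0(φ) = φ`, `a_k(φ)(x) = ∫ J(x−y) a_{k−1}(φ)(y) dy`. -/
noncomputable def ak (J : ℝ → ℝ) : ℕ → (ℝ → ℝ) → ℝ → ℝ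
  | 0, φ => φ
  | k + 1, φ => fun x => ∫ y, J (x - y) * ak J k φ y

/-- The linear solution map `T(t)φ(x) = e^{−t} Σ_{k=0}^∞ (t^k/k!) a_k(φ)(x)`. -/
noncomputable def Tmap (J : ℝ → ℝ) (t : ℝ) (φ : ℝ → ℝ) (x : ℝ) : ℝ :=
  Real.exp (-t) * ∑' k : ℕ, t ^ k / (Nat.factorial k) * ak J k φ x

/-- The Kuratowski measure of noncompactness: the infimum (in `ℝ≥0∞`, so `∞` if no
such cover exists) of all `ε` such that `A` admits a finite cover by sets of
diameter at most `ε`. -/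
noncomputable def kurat {X : Type*} [PseudoEMetricSpace X] (A : Set X) : ℝ≥0∞ :=
  sInf {ε : ℝ≥0∞ | ∃ (n : ℕ) (C : Fin n → Set X), A ⊆ ⋃ i, C i ∧
    ∀ i, EMetric.diam (C i) ≤ ε}

/-- The restrictions to `[a,b']` of the members of a set `V` of functions on `ℝ`,
regarded as a subset of the Banach space `C([a,b'], ℝ)` with the sup norm. -/
def restrictSet (a b' : ℝ) (V : Set (ℝ → ℝ)) : Set C(Set.Icc a b', ℝ) :=
  {ψ | ∃ φ ∈ V, ∀ x : Set.Icc a b', ψ x = φ ↑x}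

/-!
Splitting off the `k = 0` term, `T(t)φ = e^{-t} φ + R(t)φ`, where `R(t)φ` is a sub-probability
(Poisson) mixture of the iterated convolutions `a_k(φ)`, `k ≥ 1`. Each of these takes values in
`[0, b]` and admits the modulus of continuity `h ↦ b ‖J(· - h) - J‖₁`, which tends to `0` by
continuity of translation in `L¹`. So the remainders restricted to `I` lie in a set that is compact
by Arzelà–Ascoli, and `α((T(t)U)_I) ≤ α(e^{-t} U_I) + α(compact) = e^{-t} α(U_I)`.
-/

open Filter Topology
open scoped Pointwise NNReal

section Kuratowski

variable {X : Type*} [PseudoEMetricSpace X]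

lemma kurat_le_of_cover {ι : Type*} [Finite ι] {A : Set X} (C : ι → Set X) {ε : ℝ≥0∞}
    (hA : A ⊆ ⋃ i, C i) (hC : ∀ i, Metric.ediam (C i) ≤ ε) : kurat A ≤ ε :=
  let e := Finite.equivFin ι
  sInf_le ⟨_, C ∘ e.symm,
    hA.trans (iUnion_subset fun i => subset_iUnion_of_subset (e i) (by simp)), fun _ => hC _⟩

lemma kurat_mono {A B : Set X} (h : A ⊆ B) : kurat A ≤ kurat B :=
  sInf_le_sInf fun _ ⟨n, C, hB, hC⟩ => ⟨n, C, h.trans hB, hC⟩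

lemma kurat_eq_zero_of_totallyBounded {A : Set X} (h : TotallyBounded A) : kurat A = 0 := by
  refine nonpos_iff_eq_zero.1 (ENNReal.le_of_forall_pos_le_add fun ε hε _ => ?_)
  obtain ⟨s, hs, hAs⟩ := EMetric.totallyBounded_iff.1 h (ε / 2 : ℝ≥0) (by simpa using hε.ne')
  have := hs.to_subtype
  refine kurat_le_of_cover (fun x : s => Metric.eball (x : X) (ε / 2 : ℝ≥0)) ?_ fun _ => ?_
  · simpa only [iUnion_coe_set] using hAs
  · calc Metric.ediam _ ≤ 2 * ((ε / 2 : ℝ≥0) : ℝ≥0∞) := Metric.ediam_eball_le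
      _ = 0 + ε := by
        rw [zero_add, ← ENNReal.coe_ofNat, ← ENNReal.coe_mul, mul_div_cancel₀ _ two_ne_zero]

lemma LipschitzWith.kurat_image_le {Y : Type*} [PseudoEMetricSpace Y] {K : ℝ≥0} {f : X → Y}
    (hf : LipschitzWith K f) (A : Set X) : kurat (f '' A) ≤ K * kurat A := by
  conv_rhs => rw [kurat, sInf_eq_iInf', ENNReal.mul_iInf' (by simp)
    fun _ => ⟨⟨⊤, 1, fun _ => A, subset_iUnion_of_subset 0 le_rfl, fun _ => le_top⟩⟩]
  refine le_iInf fun ⟨ε, n, C, hA, hC⟩ => kurat_le_of_cover (fun i => f '' C i) ?_ fun i => ?_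
  · simpa only [image_iUnion] using image_mono hA
  · exact (hf.ediam_image_le _).trans (by gcongr; exact hC i)

end Kuratowski

lemma kurat_add_le {E : Type*} [SeminormedAddCommGroup E] (A B : Set E) :
    kurat (A + B) ≤ kurat A + kurat B := by
  show _ ≤ sInf _ + sInf _
  simp only [sInf_eq_iInf]
  refine ENNReal.le_iInf₂_add_iInf₂ fun ε ⟨n, C, hA, hC⟩ δ ⟨m, D, hB, hD⟩ => ?_
  refine kurat_le_of_cover (fun p : Fin n × Fin m => C p.1 + D p.2) ?_ fun p => ?_
  · rintro _ ⟨x, hx, y, hy, rfl⟩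
    obtain ⟨i, hi⟩ := mem_iUnion.1 (hA hx)
    obtain ⟨j, hj⟩ := mem_iUnion.1 (hB hy)
    exact mem_iUnion.2 ⟨(i, j), add_mem_add hi hj⟩
  · refine Metric.ediam_le ?_
    rintro _ ⟨x, hx, y, hy, rfl⟩ _ ⟨x', hx', y', hy', rfl⟩
    calc edist (x + y) (x' + y') ≤ edist x x' + edist y y' := edist_add_add_le _ _ _ _
      _ ≤ ε + δ := add_le_add ((Metric.edist_le_ediam_of_mem hx hx').trans (hC _))
          ((Metric.edist_le_ediam_of_mem hy hy').trans (hD _))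

lemma abs_le_of_mem_Icc {x b : ℝ} (h : x ∈ Icc 0 b) : |x| ≤ b :=
  (abs_of_nonneg h.1).trans_le h.2

section SubProbabilityWeights

variable {p f : ℕ → ℝ} {c : ℝ}

lemma norm_mul_le_of_abs_le {p f c : ℝ} (hp : 0 ≤ p) (hf : |f| ≤ c) : ‖p * f‖ ≤ p * c := by
  rw [norm_mul, Real.norm_of_nonneg hp, Real.norm_eq_abs]
  exact mul_le_mul_of_nonneg_left hf hp

lemma summable_mul_of_abs_le (hp0 : ∀ k, 0 ≤ p k) (hp : Summable p) (hf : ∀ k, |f k| ≤ c) :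
    Summable fun k => p k * f k :=
  .of_norm_bounded (hp.mul_right c) fun k => norm_mul_le_of_abs_le (hp0 k) (hf k)

lemma abs_tsum_mul_le (hp0 : ∀ k, 0 ≤ p k) (hp : Summable p) (hp1 : ∑' k, p k ≤ 1)
    (hf : ∀ k, |f k| ≤ c) : |∑' k, p k * f k| ≤ c :=
  calc |∑' k, p k * f k| ≤ (∑' k, p k) * c :=
        tsum_of_norm_bounded (hp.hasSum.mul_right c) fun k => norm_mul_le_of_abs_le (hp0 k) (hf k)
    _ ≤ c := mul_le_of_le_one_left ((abs_nonneg _).trans (hf 0)) hp1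

end SubProbabilityWeights

def modulusClass (X : Type*) [PseudoMetricSpace X] (b : ℝ) (w : ℝ → ℝ) : Set (X → ℝ) :=
  {f | (∀ x, f x ∈ Icc 0 b) ∧ ∀ x y, dist (f x) (f y) ≤ w (dist x y)}

namespace modulusClass

variable {X : Type*} [PseudoMetricSpace X] {b : ℝ} {w : ℝ → ℝ}

lemma continuous (hw : Tendsto w (𝓝 0) (𝓝 0)) {f : X → ℝ} (hf : f ∈ modulusClass X b w) :
    Continuous f :=
  (Metric.equicontinuous_of_continuity_modulus w hw (fun _ : Unit => f)
    fun x y _ => hf.2 x y).continuous ()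

lemma isClosed : IsClosed (modulusClass X b w) := by
  simp only [modulusClass, ofPred_and, ofPred_forall]
  exact (isClosed_iInter fun x => isClosed_Icc.preimage (continuous_apply x)).inter
    (isClosed_iInter fun x => isClosed_iInter fun y => isClosed_le (by fun_prop) continuous_const)

lemma isCompact_setOf_coe_mem [CompactSpace X] (hw : Tendsto w (𝓝 0) (𝓝 0)) :
    IsCompact {f : C(X, ℝ) | ⇑f ∈ modulusClass X b w} := by
  have himage : ContinuousMap.toFun '' {f : C(X, ℝ) | ⇑f ∈ modulusClass X b w} =
      modulusClass X b w :=
    Subset.antisymm (image_subset_iff.2 fun f hf => hf) fun f hf => ⟨⟨f, continuous hw hf⟩, hf, rfl⟩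
  refine ArzelaAscoli.isCompact_of_equicontinuous _ ?_
    (Metric.equicontinuous_of_continuity_modulus w hw _ fun x y f => f.2.2 x y)
  rw [himage]
  exact (isCompact_univ_pi fun _ => isCompact_Icc).of_isClosed_subset isClosed
    fun f hf x _ => hf.1 x

lemma tsum_mul_mem {p : ℕ → ℝ} (hp0 : ∀ k, 0 ≤ p k) (hp : Summable p) (hp1 : ∑' k, p k ≤ 1)
    {g : ℕ → X → ℝ} (hg : ∀ k, g k ∈ modulusClass X b w) :
    (fun x => ∑' k, p k * g k x) ∈ modulusClass X b w := by
  have hgb (x : X) (k : ℕ) : |g k x| ≤ b := abs_le_of_mem_Icc ((hg k).1 x)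
  refine ⟨fun x => ⟨tsum_nonneg fun k => mul_nonneg (hp0 k) ((hg k).1 x).1,
    (le_abs_self _).trans (abs_tsum_mul_le hp0 hp hp1 (hgb x))⟩, fun x y => ?_⟩
  rw [Real.dist_eq, ← (summable_mul_of_abs_le hp0 hp (hgb x)).tsum_sub
    (summable_mul_of_abs_le hp0 hp (hgb y))]
  simp only [← mul_sub]
  exact abs_tsum_mul_le hp0 hp hp1 fun k => (hg k).2 x y

end modulusClass

lemma totallyBounded_restrictSet_modulusClass {a b' b : ℝ} {w : ℝ → ℝ}
    (hw : Tendsto w (𝓝 0) (𝓝 0)) : TotallyBounded (restrictSet a b' (modulusClass ℝ b w)) := by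
  refine (modulusClass.isCompact_setOf_coe_mem (X := Icc a b') (b := b) hw).totallyBounded.subset ?_
  rintro f ⟨φ, hφ, hf⟩
  refine ⟨fun x => hf x ▸ hφ.1 x, fun x y => ?_⟩
  rw [hf, hf, Subtype.dist_eq]
  exact hφ.2 x y

lemma restrictSet_image_subset_smul_add (a b' c : ℝ) {V W : Set (ℝ → ℝ)}
    {F : (ℝ → ℝ) → ℝ → ℝ} (hV : ∀ φ ∈ V, Continuous φ) (hF : ∀ φ ∈ V, F φ - c • φ ∈ W) :
    restrictSet a b' (F '' V) ⊆ c • restrictSet a b' V + restrictSet a b' W := by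
  rintro ψ ⟨_, ⟨φ, hφ, rfl⟩, hψ⟩
  let φI : C(Icc a b', ℝ) := ⟨fun x => φ x, (hV φ hφ).comp continuous_subtype_val⟩
  refine ⟨c • φI, smul_mem_smul_set ⟨φ, hφ, fun _ => rfl⟩, ψ - c • φI,
    ⟨_, hF φ hφ, fun x => ?_⟩, add_sub_cancel _ _⟩
  simp [φI, hψ]

noncomputable def translationModulus (J : ℝ → ℝ) (h : ℝ) : ℝ := ∫ u, |J (u - h) - J u|

lemma tendsto_translationModulus {J : ℝ → ℝ} (hJi : Integrable J) :
    Tendsto (translationModulus J) (𝓝 0) (𝓝 0) := by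
  let JL : Lp ℝ 1 (volume : Measure ℝ) := hJi.toL1 J
  let shift : C(ℝ, C(ℝ, ℝ)) := ContinuousMap.curry ⟨fun p : ℝ × ℝ => p.2 - p.1, by fun_prop⟩
  have hshift (h : ℝ) : MeasurePreserving (shift h) volume volume :=
    measurePreserving_sub_right volume h
  let F : ℝ → Lp ℝ 1 (volume : Measure ℝ) := fun h =>
    Lp.compMeasurePreserving (shift h) (hshift h) JL
  have hF : Continuous F :=
    continuous_const.compMeasurePreservingLp shift.continuous hshift ENNReal.one_ne_top
  have hFcoe (h : ℝ) : F h =ᵐ[volume] fun u => J (u - h) :=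
    (Lp.coeFn_compMeasurePreserving JL (hshift h)).trans
      ((hshift h).quasiMeasurePreserving.ae_eq (hJi.coeFn_toL1))
  have hnorm : translationModulus J = fun h => ‖F h - F 0‖ := by
    ext h
    rw [L1.norm_eq_integral_norm]
    refine integral_congr_ae ?_
    filter_upwards [Lp.coeFn_sub (F h) (F 0), hFcoe h, hFcoe 0] with u h1 h2 h3
    simp only [h1, Pi.sub_apply, h2, h3, Real.norm_eq_abs, sub_zero]
  rw [hnorm]
  exact tendsto_iff_norm_sub_tendsto_zero.1 (hF.tendsto 0)

lemma tendsto_const_mul_translationModulus {J : ℝ → ℝ} (hJi : Integrable J) (b : ℝ) :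
    Tendsto (fun r => b * translationModulus J r) (𝓝 0) (𝓝 0) := by
  simpa using (tendsto_translationModulus hJi).const_mul b

section Convolution

variable {J : ℝ → ℝ} {ψ : ℝ → ℝ} {b : ℝ}

lemma integrable_mul_of_abs_le (hJi : Integrable J) (hψm : AEStronglyMeasurable ψ volume)
    (hψb : ∀ y, |ψ y| ≤ b) (x : ℝ) : Integrable fun y => J (x - y) * ψ y :=
  (hJi.comp_sub_left x).mul_bdd hψm (ae_of_all _ fun y => (Real.norm_eq_abs _).trans_le (hψb y))

lemma integral_mul_mem_Icc (hJ0 : ∀ y, 0 ≤ J y) (hJi : Integrable J) (hJ1 : ∫ y, J y = 1)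
    (hψm : AEStronglyMeasurable ψ volume) (hψ : ∀ y, ψ y ∈ Icc 0 b) (x : ℝ) :
    ∫ y, J (x - y) * ψ y ∈ Icc 0 b := by
  have hJx : Integrable fun y => J (x - y) := hJi.comp_sub_left x
  refine ⟨integral_nonneg fun y => mul_nonneg (hJ0 _) (hψ y).1, ?_⟩
  calc ∫ y, J (x - y) * ψ y ≤ ∫ y, J (x - y) * b :=
        integral_mono (integrable_mul_of_abs_le hJi hψm (abs_le_of_mem_Icc <| hψ ·) x)
          (hJx.mul_const b) fun y => mul_le_mul_of_nonneg_left (hψ y).2 (hJ0 _)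
    _ = b := by rw [integral_mul_const, integral_sub_left_eq_self J volume x, hJ1, one_mul]

lemma abs_integral_mul_sub_le (hJi : Integrable J) (hψm : AEStronglyMeasurable ψ volume)
    (hψb : ∀ y, |ψ y| ≤ b) (x x' : ℝ) :
    |(∫ y, J (x - y) * ψ y) - ∫ y, J (x' - y) * ψ y| ≤ b * translationModulus J (x' - x) := by
  have hJdiff : Integrable fun y => |J (x - y) - J (x' - y)| :=
    ((hJi.comp_sub_left x).sub (hJi.comp_sub_left x')).abs
  have hshift : ∫ y, |J (x - y) - J (x' - y)| = translationModulus J (x' - x) := by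
    rw [translationModulus, ← integral_sub_left_eq_self _ volume x']
    congr 1 with y
    rw [sub_sub_cancel, show x - (x' - y) = y - (x' - x) by ring]
  rw [← integral_sub (integrable_mul_of_abs_le hJi hψm hψb x)
    (integrable_mul_of_abs_le hJi hψm hψb x')]
  calc |∫ y, (J (x - y) * ψ y - J (x' - y) * ψ y)| ≤ ∫ y, |J (x - y) - J (x' - y)| * b :=
        (Real.norm_eq_abs _).symm.trans_le <| norm_integral_le_of_norm_le (hJdiff.mul_const b) <|
          ae_of_all _ fun y => by
            rw [← sub_mul, Real.norm_eq_abs, abs_mul]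
            exact mul_le_mul_of_nonneg_left (hψb y) (abs_nonneg _)
    _ = b * translationModulus J (x' - x) := by rw [integral_mul_const, hshift, mul_comm]

lemma convolution_mem_modulusClass (hJ0 : ∀ y, 0 ≤ J y) (hJi : Integrable J)
    (hJ1 : ∫ y, J y = 1) (hψm : AEStronglyMeasurable ψ volume) (hψ : ∀ y, ψ y ∈ Icc 0 b) :
    (fun x => ∫ y, J (x - y) * ψ y) ∈ modulusClass ℝ b fun r => b * translationModulus J r := by
  have hψb (y : ℝ) : |ψ y| ≤ b := abs_le_of_mem_Icc (hψ y)
  refine ⟨integral_mul_mem_Icc hJ0 hJi hJ1 hψm hψ, fun x x' => ?_⟩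
  simp only [Real.dist_eq]
  rcases le_total x x' with h | h
  · rw [abs_of_nonpos (sub_nonpos.2 h), neg_sub]
    exact abs_integral_mul_sub_le hJi hψm hψb x x'
  · rw [abs_of_nonneg (sub_nonneg.2 h), abs_sub_comm]
    exact abs_integral_mul_sub_le hJi hψm hψb x' x

end Convolution

section IteratedConvolution

variable {J : ℝ → ℝ} (hJ0 : ∀ y, 0 ≤ J y) (hJi : Integrable J) (hJ1 : ∫ y, J y = 1)
  {b : ℝ} {φ : ℝ → ℝ} (hφc : Continuous φ) (hφ : ∀ x, φ x ∈ Icc 0 b)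
include hJ0 hJi hJ1 hφc hφ

lemma continuous_ak_and_mem_Icc (k : ℕ) :
    Continuous (ak J k φ) ∧ ∀ x, ak J k φ x ∈ Icc 0 b := by
  induction k with
  | zero => exact ⟨hφc, hφ⟩
  | succ k ih =>
    have h := convolution_mem_modulusClass hJ0 hJi hJ1 ih.1.aestronglyMeasurable ih.2
    exact ⟨modulusClass.continuous (tendsto_const_mul_translationModulus hJi b) h, h.1⟩

lemma ak_succ_mem_modulusClass (k : ℕ) :
    ak J (k + 1) φ ∈ modulusClass ℝ b fun r => b * translationModulus J r :=
  convolution_mem_modulusClass hJ0 hJi hJ1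
    (continuous_ak_and_mem_Icc hJ0 hJi hJ1 hφc hφ k).1.aestronglyMeasurable
    (continuous_ak_and_mem_Icc hJ0 hJi hJ1 hφc hφ k).2

lemma Tmap_sub_smul_mem_modulusClass {t : ℝ} (ht : 0 ≤ t) :
    Tmap J t φ - Real.exp (-t) • φ ∈ modulusClass ℝ b fun r => b * translationModulus J r := by
  set p : ℕ → ℝ := fun k => Real.exp (-t) * (t ^ k / (Nat.factorial k : ℝ))
  have hp : HasSum p 1 := by
    have := (NormedSpace.expSeries_div_hasSum_exp t).mul_left (Real.exp (-t))
    rwa [← Real.exp_eq_exp_ℝ, ← Real.exp_add, neg_add_cancel, Real.exp_zero] at this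
  have hp0 (k : ℕ) : 0 ≤ p k := by positivity
  have hak (k : ℕ) (x : ℝ) : |ak J k φ x| ≤ b :=
    abs_le_of_mem_Icc ((continuous_ak_and_mem_Icc hJ0 hJi hJ1 hφc hφ k).2 x)
  have hTmap (x : ℝ) :
      Tmap J t φ x = Real.exp (-t) * φ x + ∑' k, p (k + 1) * ak J (k + 1) φ x := by
    simp_rw [Tmap, ← tsum_mul_left, ← mul_assoc]
    rw [(summable_mul_of_abs_le hp0 hp.summable (hak · x)).tsum_eq_zero_add]
    simp [p, ak]
  have htail : ∑' k, p (k + 1) ≤ 1 := by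
    have := hp.summable.tsum_eq_zero_add
    rw [hp.tsum_eq] at this
    linarith [hp0 0]
  convert modulusClass.tsum_mul_mem (fun k => hp0 (k + 1)) ((summable_nat_add_iff 1).2 hp.summable)
    htail (ak_succ_mem_modulusClass hJ0 hJi hJ1 hφc hφ) using 1
  ext x
  rw [Pi.sub_apply, Pi.smul_apply, smul_eq_mul, hTmap, add_sub_cancel_left]

end IteratedConvolution

theorem stmt_10_general (J : ℝ → ℝ) (hJ0 : ∀ y, 0 ≤ J y) (hJi : Integrable J)
    (hJ1 : ∫ y, J y = 1) (b : ℝ)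
    (a b' : ℝ) (t : ℝ) (ht : 0 ≤ t)
    (U : Set (ℝ → ℝ)) (hU : ∀ φ ∈ U, Continuous φ ∧ ∀ x, φ x ∈ Set.Icc 0 b) :
    kurat (restrictSet a b' ((fun φ => Tmap J t φ) '' U)) ≤
      ENNReal.ofReal (Real.exp (-t)) * kurat (restrictSet a b' U) := by
  set W := restrictSet a b' (modulusClass ℝ b fun r => b * translationModulus J r)
  have hsub : restrictSet a b' ((fun φ => Tmap J t φ) '' U) ⊆
      Real.exp (-t) • restrictSet a b' U + W :=
    restrictSet_image_subset_smul_add a b' _ (fun φ hφ => (hU φ hφ).1) fun φ hφ =>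
      Tmap_sub_smul_mem_modulusClass hJ0 hJi hJ1 (hU φ hφ).1 (hU φ hφ).2 ht
  have hW : kurat W = 0 := kurat_eq_zero_of_totallyBounded
    (totallyBounded_restrictSet_modulusClass (tendsto_const_mul_translationModulus hJi b))
  calc kurat (restrictSet a b' ((fun φ => Tmap J t φ) '' U))
      ≤ kurat (Real.exp (-t) • restrictSet a b' U) + kurat W :=
        (kurat_mono hsub).trans (kurat_add_le _ _)
    _ ≤ ‖Real.exp (-t)‖₊ * kurat (restrictSet a b' U) := by
        rw [hW, add_zero, ← image_smul]
        exact (lipschitzWith_smul _).kurat_image_le _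
    _ = ENNReal.ofReal (Real.exp (-t)) * kurat (restrictSet a b' U) := by
        rw [← enorm_eq_nnnorm, Real.enorm_of_nonneg (Real.exp_pos _).le]

/-- Lemma 2: for any nonempty bounded interval `I = [a,b']`, any
`t ≥ 0` and any `U ⊆ C_b`, `α((T(t)U)_I) ≤ e^{−t} α(U_I)`, where `α` is the
Kuratowski measure of noncompactness in `C(I, ℝ)` with the sup norm. -/
theorem stmt_10 (J : ℝ → ℝ) (hJ0 : ∀ y, 0 ≤ J y) (hJi : Integrable J)
    (hJ1 : ∫ y, J y = 1) (b : ℝ) (hb : 0 < b)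
    (a b' : ℝ) (hab : a ≤ b') (t : ℝ) (ht : 0 ≤ t)
    (U : Set (ℝ → ℝ)) (hU : ∀ φ ∈ U, Continuous φ ∧ ∀ x, φ x ∈ Set.Icc 0 b) :
    kurat (restrictSet a b' ((fun φ => Tmap J t φ) '' U)) ≤
      ENNReal.ofReal (Real.exp (-t)) * kurat (restrictSet a b' U) :=
  stmt_10_general J hJ0 hJi hJ1 b a b' t ht U hU
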